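/- Let (S_X, S_Z) be a CSS stabilizer code on a finite type Q satisfying the duality, single-logical-qubit, intersection, and T-invariance assumptions, let α : Finset Q be NOT tolerable, and let ρ be an encoded state. Then there exists a logical X operator λ such that α Δ λ is tolerable, and for any such λ, setting w := U† X_λ U X_λ, one has (1/|S_X|) · Σ_{c ∈ S_X} X_c (U X_α ρ X_α U†) X_c = X_α ((1/|E_{α Δ λ}|) · Σ_{z ∈ E_{α Δ λ}} Z_z (U w ρ w† U†) Z_z) X_α. (Theorem 1, non-tolerable case: the propagated error additionally includes the encoded gate w = U₀† X U₀ X applied before U.) -/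

import Mathlib

/-!
Non-tolerability of `α` means that `α ∩ β₀` is a logical `Z` operator for some `β₀ ∈ Z_X(S)`.
Given a logical `X` operator `l` and `β ∈ Z_X(S)` with `α ∩ β ∈ Z_Z(S)`, the operators `α ∩ β` and
`l ∩ β` are both stabilizers if `β ∈ S_X`, and both logical (the first by comparison with `α ∩ β₀`)
if `β` is logical; with a single logical qubit, `(α ∆ l) ∩ β` is a stabilizer either way.

The operator identity is checked entry by entry. Since `ρ` is invariant under `S_X`-shifts and
supported on `Z_X(S) × Z_X(S)`, both sides are an average of phases times an entry of `ρ`. With `d`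
the difference of the row and column supports, T-invariance turns the `S_X`-average into a phase
times the character sum `[d ∩ α ∈ Z_Z(S)]`. The set `E_{α ∆ l}` is a coset `z₀ ∆ Z(Z(G_{α ∆ l}))`,
so the `E`-average is a phase times `(-1)^|d ∩ z₀| [d ∈ Z(G_{α ∆ l})]`. Tolerability of `α ∆ l`
makes the two indicators agree, and the congruence defining `z₀` matches the phases. That `E` is
nonempty comes from extending a linear functional over `𝔽₂`.
-/

open Finset
open scoped symmDiff Matrix

namespace CC

variable {Q : Type*} [Fintype Q] [DecidableEq Q]

/-- A subgroup of the abelian group `(Finset Q, ∆)`. -/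
def IsSubgroup (S : Set (Finset Q)) : Prop :=
  ∅ ∈ S ∧ ∀ a ∈ S, ∀ b ∈ S, a ∆ b ∈ S

/-- The subgroup of `(Finset Q, ∆)` generated by a set. -/
def closure (T : Set (Finset Q)) : Set (Finset Q) :=
  ⋂₀ {S : Set (Finset Q) | IsSubgroup S ∧ T ⊆ S}

/-- A CSS stabilizer code on the qubits `Q`. -/
structure CSS (Q : Type*) [Fintype Q] [DecidableEq Q] where
  SX : Set (Finset Q)
  SZ : Set (Finset Q)
  hSX : IsSubgroup SX
  hSZ : IsSubgroup SZ
  comm : ∀ a ∈ SZ, ∀ b ∈ SX, 2 ∣ (a ∩ b).card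

def ZX (C : CSS Q) : Set (Finset Q) := {γ | ∀ f ∈ C.SZ, 2 ∣ (γ ∩ f).card}

def ZZ (C : CSS Q) : Set (Finset Q) := {z | ∀ c ∈ C.SX, 2 ∣ (z ∩ c).card}

/-- Duality assumption. -/
def Dual (C : CSS Q) : Prop :=
  C.SZ = {z | ∀ γ ∈ ZX C, 2 ∣ (z ∩ γ).card} ∧
  C.SX = {c | ∀ z ∈ ZZ C, 2 ∣ (c ∩ z).card}

def LogicalX (C : CSS Q) (l : Finset Q) : Prop := l ∈ ZX C ∧ l ∉ C.SX

def LogicalZ (C : CSS Q) (l : Finset Q) : Prop := l ∈ ZZ C ∧ l ∉ C.SZ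

/-- Single-logical-qubit assumption. -/
def SingleQubit (C : CSS Q) : Prop :=
  (ZX C ≠ C.SX ∧ ∀ l l', LogicalX C l → LogicalX C l' → l ∆ l' ∈ C.SX) ∧
  (ZZ C ≠ C.SZ ∧ ∀ l l', LogicalZ C l → LogicalZ C l' → l ∆ l' ∈ C.SZ)

/-- Intersection axiom. -/
def Inter (C : CSS Q) : Prop :=
  ZZ C = {x | ∃ α ∈ ZX C, ∃ β ∈ ZX C, x = α ∩ β}

def G (C : CSS Q) (α : Finset Q) : Set (Finset Q) :=
  closure (C.SZ ∪ {x | ∃ β ∈ ZX C, x = α ∩ β})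

def H (C : CSS Q) (α : Finset Q) : Set (Finset Q) :=
  closure (C.SZ ∪ {x | ∃ β ∈ C.SX, x = α ∩ β})

def Zof (K : Set (Finset Q)) : Set (Finset Q) := {γ | ∀ h ∈ K, 2 ∣ (γ ∩ h).card}

def Tolerable (C : CSS Q) (α : Finset Q) : Prop := ∀ z ∈ G C α, ¬ LogicalZ C z

def g (b : Q → ℤ) (s : Finset Q) : ℤ := ∑ q ∈ s, b q

/-- T-invariance assumption. -/
def TInv (C : CSS Q) (b : Q → ℤ) : Prop :=
  (∀ β ∈ C.SX, (8 : ℤ) ∣ g b β) ∧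
  (∀ β ∈ C.SX, ∀ γ ∈ ZX C, (8 : ℤ) ∣ (g b β - 2 * g b (γ ∩ β)))

def E (C : CSS Q) (b : Q → ℤ) (α : Finset Q) : Set (Finset Q) :=
  {z | ∀ γ ∈ Zof (G C α), g b (γ ∩ α) ≡ 2 * ((z ∩ γ).card : ℤ) [ZMOD 4]}

/- Quantum setting -/

abbrev M (Q : Type*) [Fintype Q] [DecidableEq Q] :=
  Matrix (Q → ZMod 2) (Q → ZMod 2) ℂ

def supp (v : Q → ZMod 2) : Finset Q := Finset.univ.filter (fun q => v q = 1)

def ind (α : Finset Q) : Q → ZMod 2 := fun q => if q ∈ α then 1 else 0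

def XM (α : Finset Q) : M Q :=
  Matrix.of fun u v => if u = v + ind α then (1 : ℂ) else 0

noncomputable def ZM (α : Finset Q) : M Q :=
  Matrix.diagonal fun v => (-1 : ℂ) ^ (supp v ∩ α).card

noncomputable def AM (b : Q → ℤ) (α : Finset Q) : M Q :=
  Matrix.diagonal fun v => Complex.I ^ (g b (α ∩ supp v))

noncomputable def UM (b : Q → ℤ) : M Q :=
  Matrix.diagonal fun v => Complex.exp (Real.pi * Complex.I / 4) ^ (g b (supp v))

def Encoded (C : CSS Q) (ρ : M Q) : Prop :=
  ρ.trace = 1 ∧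
  (∀ c ∈ C.SX, XM c * ρ = ρ ∧ ρ * XM c = ρ) ∧
  (∀ f ∈ C.SZ, ZM f * ρ = ρ ∧ ρ * ZM f = ρ)

instance : Std.Commutative (α := Finset Q) (· ∆ ·) := ⟨symmDiff_comm⟩
instance : Std.Associative (α := Finset Q) (· ∆ ·) := ⟨symmDiff_assoc⟩

/-- Iterated symmetric difference over a finite index set. -/
def bigΔ {ι : Type*} (s : Finset ι) (f : ι → Finset Q) : Finset Q :=
  s.fold (· ∆ ·) ∅ f

theorem two_dvd_g_sub_card {ι : Type*} {b : ι → ℤ} (hb : ∀ q, Odd (b q)) (x : Finset ι) :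
    (2 : ℤ) ∣ g b x - x.card := by
  rw [g, Finset.card_eq_sum_ones, Nat.cast_sum, ← Finset.sum_sub_distrib]
  exact Finset.dvd_sum fun q _ => by obtain ⟨k, hk⟩ := hb q; push_cast; omega

section SymmDiffGroup

variable {ι : Type*} [DecidableEq ι]

theorem inter_symmDiff_left (a c d : Finset ι) : a ∩ (c ∆ d) = (a ∩ c) ∆ (a ∩ d) :=
  inf_symmDiff_distrib_left a c d

theorem inter_symmDiff_right (a c d : Finset ι) : (a ∆ c) ∩ d = (a ∩ d) ∆ (c ∩ d) :=
  inf_symmDiff_distrib_right a c d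

theorem symmDiff_symmDiff_symmDiff_self (a c d : Finset ι) : (a ∆ d) ∆ (c ∆ d) = a ∆ c := by
  rw [symmDiff_symmDiff_symmDiff_comm, symmDiff_self, symmDiff_bot]

theorem g_symmDiff (b : ι → ℤ) (x y : Finset ι) :
    g b (x ∆ y) = g b x + g b y - 2 * g b (x ∩ y) := by
  have hunion : g b (x ∪ y) + g b (x ∩ y) = g b x + g b y := Finset.sum_union_inter
  have hsdiff : g b ((x ∪ y) \ (x ∩ y)) = g b (x ∪ y) - g b (x ∩ y) :=
    Finset.sum_sdiff_eq_sub Finset.inter_subset_union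
  rw [symmDiff_eq_sup_sdiff_inf]
  change g b ((x ∪ y) \ (x ∩ y)) = _
  omega

theorem card_symmDiff_add (x y : Finset ι) :
    (x ∆ y).card + 2 * (x ∩ y).card = x.card + y.card := by
  have h := g_symmDiff (fun _ => 1) x y
  simp only [g, Finset.sum_const, nsmul_eq_mul, mul_one] at h
  omega

theorem neg_one_pow_card_symmDiff {R : Type*} [Monoid R] [HasDistribNeg R] (x y : Finset ι) :
    (-1 : R) ^ (x ∆ y).card = (-1) ^ x.card * (-1) ^ y.card := by
  rw [← pow_add, ← card_symmDiff_add, pow_add, pow_mul, neg_one_sq, one_pow, mul_one]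

theorem isSubgroup_Zof (S : Set (Finset ι)) : IsSubgroup (Zof S) := by
  refine ⟨fun h _ => by simp, fun a ha c hc h hh => ?_⟩
  have := card_symmDiff_add (a ∩ h) (c ∩ h)
  have ha := ha h hh
  have hc := hc h hh
  rw [inter_symmDiff_right]
  omega

theorem Zof_antitone {S T : Set (Finset ι)} (h : S ⊆ T) : Zof T ⊆ Zof S :=
  fun _ hγ x hx => hγ x (h hx)

theorem subset_Zof_Zof (S : Set (Finset ι)) : S ⊆ Zof (Zof S) := by
  intro a ha γ hγ
  rw [Finset.inter_comm]
  exact hγ a ha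

theorem Zof_Zof_Zof (S : Set (Finset ι)) : Zof (Zof (Zof S)) = Zof S :=
  (Zof_antitone (subset_Zof_Zof S)).antisymm (subset_Zof_Zof (Zof S))

theorem isSubgroup_closure (T : Set (Finset ι)) : IsSubgroup (closure T) :=
  ⟨fun _ hS => hS.1.1, fun _ ha _ hc S hS => hS.1.2 _ (ha S hS) _ (hc S hS)⟩

theorem subset_closure (T : Set (Finset ι)) : T ⊆ closure T :=
  fun _ hx _ hS => hS.2 hx

theorem closure_subset {T S : Set (Finset ι)} (hS : IsSubgroup S) (h : T ⊆ S) :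
    closure T ⊆ S :=
  fun _ hx => hx S ⟨hS, h⟩

theorem Zof_closure (T : Set (Finset ι)) : Zof (closure T) = Zof T := by
  refine (Zof_antitone (subset_closure T)).antisymm fun γ hγ h hh => ?_
  have hT : T ⊆ Zof {γ} := fun t ht γ' hγ' => by
    rw [Set.mem_singleton_iff.1 hγ', Finset.inter_comm]
    exact hγ t ht
  have := closure_subset (isSubgroup_Zof {γ}) hT hh γ rfl
  rwa [Finset.inter_comm] at this

theorem IsSubgroup.symmDiff_mem_iff {S : Set (Finset ι)} (hS : IsSubgroup S) {a c : Finset ι}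
    (ha : a ∈ S) : a ∆ c ∈ S ↔ c ∈ S :=
  ⟨fun h => by simpa using hS.2 a ha _ h, hS.2 a ha c⟩

end SymmDiffGroup

section Average

variable {ι : Type*} [Fintype ι]

noncomputable def avg (S : Set (Finset ι)) (f : Finset ι → ℂ) : ℂ :=
  ((Set.toFinite S).toFinset.card : ℂ)⁻¹ * ∑ c ∈ (Set.toFinite S).toFinset, f c

theorem avg_congr {S : Set (Finset ι)} {f f' : Finset ι → ℂ} (h : ∀ c ∈ S, f c = f' c) :
    avg S f = avg S f' := by
  unfold avg
  congr 1
  exact Finset.sum_congr rfl fun c hc => h c ((Set.toFinite S).mem_toFinset.1 hc)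

theorem avg_const_mul (S : Set (Finset ι)) (k : ℂ) (f : Finset ι → ℂ) :
    avg S (fun c => k * f c) = k * avg S f := by
  simp only [avg, ← Finset.mul_sum]
  ring

variable [DecidableEq ι]

theorem avg_eq_avg_symmDiff {S T : Set (Finset ι)} (z₀ : Finset ι)
    (h : ∀ z, z ∈ T ↔ z₀ ∆ z ∈ S) (f : Finset ι → ℂ) :
    avg T f = avg S (fun w => f (z₀ ∆ w)) := by
  have hinv (z : Finset ι) : z₀ ∆ (z₀ ∆ z) = z := symmDiff_symmDiff_cancel_left z₀ z
  have hT : ∀ z ∈ (Set.toFinite T).toFinset, z₀ ∆ z ∈ (Set.toFinite S).toFinset := by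
    simp [h]
  have hS : ∀ w ∈ (Set.toFinite S).toFinset, z₀ ∆ w ∈ (Set.toFinite T).toFinset := by
    simp [h, hinv]
  unfold avg
  rw [Finset.card_nbij' (z₀ ∆ ·) (z₀ ∆ ·) hT hS (fun z _ => hinv z) (fun w _ => hinv w),
    Finset.sum_nbij' (g := fun w => f (z₀ ∆ w)) (z₀ ∆ ·) (z₀ ∆ ·) hT hS (fun z _ => hinv z)
      (fun w _ => hinv w) (fun z _ => by rw [hinv])]

theorem avg_neg_one_pow_card_inter_of_mem {S : Set (Finset ι)} (hS : IsSubgroup S)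
    {e : Finset ι} (he : e ∈ Zof S) : avg S (fun c => (-1) ^ (e ∩ c).card) = 1 := by
  have hcard : ((Set.toFinite S).toFinset.card : ℂ) ≠ 0 :=
    Nat.cast_ne_zero.2 (Finset.card_ne_zero.2 ⟨∅, (Set.toFinite S).mem_toFinset.2 hS.1⟩)
  rw [avg_congr (f' := fun _ => 1) fun c hc => (even_iff_two_dvd.2 (he c hc)).neg_one_pow]
  simp [avg, hcard]

theorem avg_neg_one_pow_card_inter_of_notMem {S : Set (Finset ι)} (hS : IsSubgroup S)
    {e : Finset ι} (he : e ∉ Zof S) : avg S (fun c => (-1) ^ (e ∩ c).card) = 0 := by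
  obtain ⟨c₀, hc₀, hodd⟩ : ∃ c₀ ∈ S, ¬ 2 ∣ (e ∩ c₀).card := by simpa [Zof] using he
  -- translating by `c₀` permutes `S` and flips the sign of every term
  have hflip := avg_eq_avg_symmDiff c₀ (fun c => (hS.symmDiff_mem_iff hc₀).symm)
    (fun c => (-1 : ℂ) ^ (e ∩ c).card)
  have hodd' : (-1 : ℂ) ^ (e ∩ c₀).card = -1 := Odd.neg_one_pow (Nat.odd_iff.2 (by omega))
  simp only [inter_symmDiff_left, neg_one_pow_card_symmDiff, hodd'] at hflip
  rw [avg_const_mul] at hflip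
  linear_combination hflip / 2

end Average

section RootOfUnity

noncomputable def ζ : ℂ := Complex.exp (Real.pi * Complex.I / 4)

theorem zeta_ne_zero : ζ ≠ 0 := Complex.exp_ne_zero _

theorem zeta_pow_eight : ζ ^ 8 = 1 := by
  rw [ζ, ← Complex.exp_nat_mul, ← Complex.exp_two_pi_mul_I]
  push_cast
  ring_nf

theorem zeta_zpow_eq_of_modEq {a c : ℤ} (h : a ≡ c [ZMOD 8]) : ζ ^ a = ζ ^ c := by
  obtain ⟨k, hk⟩ := (Int.modEq_iff_dvd.1 h.symm)
  rw [show a = c + 8 * k by omega, zpow_add₀ zeta_ne_zero, zpow_mul, zpow_ofNat, zeta_pow_eight,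
    one_zpow, mul_one]

theorem zeta_pow_four : ζ ^ 4 = -1 := by
  rw [ζ, ← Complex.exp_nat_mul, ← Complex.exp_pi_mul_I]
  push_cast
  ring_nf

theorem star_zeta_zpow (n : ℤ) : star (ζ ^ n) = ζ ^ (-n) := by
  have hstar : star ζ = ζ⁻¹ := by
    rw [ζ, ← Complex.exp_neg, Complex.star_def, ← Complex.exp_conj]
    congr 1
    simp only [map_div₀, map_mul, Complex.conj_I, Complex.conj_ofReal, map_ofNat]
    ring
  rw [star_zpow₀, hstar, inv_zpow, zpow_neg]

theorem zeta_zpow_four_mul (n : ℕ) : ζ ^ (4 * (n : ℤ)) = (-1) ^ n := by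
  rw [zpow_mul, zpow_natCast, zpow_ofNat, zeta_pow_four]

theorem zeta_zpow_four_mul_g {ι : Type*} {b : ι → ℤ} (hb : ∀ q, Odd (b q)) (x : Finset ι) :
    ζ ^ (4 * g b x) = (-1) ^ x.card := by
  have h := two_dvd_g_sub_card hb x
  rw [zeta_zpow_eq_of_modEq (c := 4 * x.card) (Int.modEq_iff_dvd.2 (by omega)),
    zeta_zpow_four_mul]

theorem zeta_zpow_g_symmDiff_sub {ι : Type*} [DecidableEq ι] {b : ι → ℤ}
    (hb : ∀ q, Odd (b q)) (x y β : Finset ι) :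
    ζ ^ (g b (x ∆ β) - g b (y ∆ β))
      = ζ ^ (g b x - g b y) * ζ ^ (-(2 * g b ((x ∆ y) ∩ β))) *
          (-1) ^ (y ∩ ((x ∆ y) ∩ β)).card := by
  have hx : x ∩ β = (y ∩ β) ∆ ((x ∆ y) ∩ β) := by
    rw [← inter_symmDiff_right, symmDiff_comm x y, symmDiff_symmDiff_cancel_left]
  have hy : (y ∩ β) ∩ ((x ∆ y) ∩ β) = y ∩ ((x ∆ y) ∩ β) := by
    ext q
    simp only [Finset.mem_inter]
    tauto
  have hexp : g b (x ∆ β) - g b (y ∆ β) = (g b x - g b y) + -(2 * g b ((x ∆ y) ∩ β)) +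
      4 * g b (y ∩ ((x ∆ y) ∩ β)) := by
    rw [g_symmDiff, g_symmDiff, hx, g_symmDiff, hy]
    ring
  rw [hexp, zpow_add₀ zeta_ne_zero, zpow_add₀ zeta_ne_zero, zeta_zpow_four_mul_g hb]

end RootOfUnity

theorem supp_zero {ι : Type*} [Fintype ι] : supp (0 : ι → ZMod 2) = ∅ := by
  ext q
  simp [supp]

section Pairing

variable {ι : Type*} [DecidableEq ι]

theorem add_ind_add_ind (v : ι → ZMod 2) (a : Finset ι) : v + ind a + ind a = v := by
  funext q
  simp only [Pi.add_apply, add_assoc, CharTwo.add_self_eq_zero, add_zero]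

variable [Fintype ι]

theorem supp_add (u v : ι → ZMod 2) : supp (u + v) = supp u ∆ supp v := by
  ext q
  simp only [supp, Finset.mem_symmDiff, Finset.mem_filter, Finset.mem_univ, true_and,
    Pi.add_apply]
  generalize u q = x
  generalize v q = y
  revert x y
  decide

theorem supp_ind (a : Finset ι) : supp (ind a) = a := by
  ext q
  by_cases h : q ∈ a <;> simp [supp, ind, h]

theorem supp_add_ind (v : ι → ZMod 2) (a : Finset ι) : supp (v + ind a) = supp v ∆ a := by
  rw [supp_add, supp_ind]

theorem ind_supp (v : ι → ZMod 2) : ind (supp v) = v := by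
  funext q
  simp only [ind, supp, Finset.mem_filter, Finset.mem_univ, true_and]
  generalize v q = x
  revert x
  decide

theorem natCast_card_inter (a c : Finset ι) :
    ((a ∩ c).card : ZMod 2) = ∑ q, ind a q * ind c q := by
  simp only [ind, mul_ite, mul_one, mul_zero, ← ite_and, Finset.sum_boole]
  congr 2
  ext q
  simp [and_comm]

theorem exists_card_inter_eq {K : Set (Finset ι)} (hK : IsSubgroup K) (φ : Finset ι → ZMod 2)
    (hφ : ∀ γ ∈ K, ∀ δ ∈ K, φ (γ ∆ δ) = φ γ + φ δ) :
    ∃ z : Finset ι, ∀ γ ∈ K, ((z ∩ γ).card : ZMod 2) = φ γ := by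
  let W : AddSubgroup (ι → ZMod 2) :=
    { carrier := {v | supp v ∈ K}
      add_mem' := fun {u v} hu hv => by
        simp only [Set.mem_ofPred_eq, supp_add] at hu hv ⊢
        exact hK.2 _ hu _ hv
      zero_mem' := by simpa [supp_zero] using hK.1
      neg_mem' := fun {v} hv => by rwa [Set.mem_ofPred_eq, ZModModule.neg_eq_self] }
  have hφ0 : φ ∅ = 0 := by
    simpa [CharTwo.add_self_eq_zero] using hφ ∅ hK.1 ∅ hK.1
  let χ : AddSubgroup.toZModSubmodule 2 W →+ ZMod 2 :=
    { toFun := fun w => φ (supp w)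
      map_zero' := by simpa [supp_zero] using hφ0
      map_add' := fun u w => by simpa [supp_add] using hφ _ u.2 _ w.2 }
  obtain ⟨f, hf⟩ := LinearMap.exists_extend (χ.toZModLinearMap 2)
  refine ⟨supp fun q => f fun j => if q = j then 1 else 0, fun γ hγ => ?_⟩
  have hfγ : f (ind γ) = φ γ := by
    have := LinearMap.congr_fun hf ⟨ind γ, show supp (ind γ) ∈ K by rwa [supp_ind]⟩
    simpa [χ, supp_ind] using this
  rw [← hfγ, LinearMap.pi_apply_eq_sum_univ f, natCast_card_inter, ind_supp]
  simp [mul_comm]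

end Pairing

section CSSCode

variable {C : CSS Q} {b : Q → ℤ}

theorem isSubgroup_ZX (C : CSS Q) : IsSubgroup (ZX C) := isSubgroup_Zof C.SZ

theorem isSubgroup_ZZ (C : CSS Q) : IsSubgroup (ZZ C) := isSubgroup_Zof C.SX

theorem SX_subset_ZX (C : CSS Q) : C.SX ⊆ ZX C := fun c hc f hf => by
  rw [Finset.inter_comm]
  exact C.comm f hf c hc

theorem SZ_subset_ZZ (C : CSS Q) : C.SZ ⊆ ZZ C := fun f hf c hc => C.comm f hf c hc

theorem mem_SZ_iff (hdual : Dual C) {z : Finset Q} :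
    z ∈ C.SZ ↔ ∀ γ ∈ ZX C, 2 ∣ (z ∩ γ).card := by
  rw [hdual.1, Set.mem_ofPred_eq]

theorem inter_mem_ZZ (hinter : Inter C) {a c : Finset Q} (ha : a ∈ ZX C) (hc : c ∈ ZX C) :
    a ∩ c ∈ ZZ C := by
  rw [hinter]
  exact ⟨a, ha, c, hc, rfl⟩

theorem two_dvd_card_of_mem_SZ (hinter : Inter C) {f : Finset Q} (hf : f ∈ C.SZ) :
    2 ∣ f.card := by
  obtain ⟨a, ha, c, -, rfl⟩ : f ∈ {x | ∃ α ∈ ZX C, ∃ β ∈ ZX C, x = α ∩ β} :=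
    hinter ▸ SZ_subset_ZZ C hf
  simpa [← Finset.inter_assoc] using ha _ hf

theorem two_dvd_card_inter_inter (hb : ∀ q, Odd (b q)) (htinv : TInv C b)
    {c γ μ : Finset Q} (hc : c ∈ C.SX) (hγ : γ ∈ ZX C) (hμ : μ ∈ ZX C) :
    2 ∣ (γ ∩ μ ∩ c).card := by
  have h0 := htinv.1 c hc
  have hγc := htinv.2 c hc γ hγ
  have hμc := htinv.2 c hc μ hμ
  have hγμc := htinv.2 c hc (γ ∆ μ) ((isSubgroup_ZX C).2 γ hγ μ hμ)
  have hcap : (γ ∩ c) ∩ (μ ∩ c) = γ ∩ μ ∩ c := by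
    ext q
    simp only [Finset.mem_inter]
    tauto
  -- T-invariance at `γ`, `μ` and `γ ∆ μ` leaves `8 ∣ 4 g(γ ∩ μ ∩ c)`
  rw [inter_symmDiff_right, g_symmDiff, hcap] at hγμc
  have hpar := two_dvd_g_sub_card hb (γ ∩ μ ∩ c)
  have : (2 : ℤ) ∣ ((γ ∩ μ ∩ c).card : ℤ) := by omega
  exact_mod_cast this

theorem inter_mem_SZ_of_mem_SX (hb : ∀ q, Odd (b q)) (hdual : Dual C)
    (htinv : TInv C b) {c γ : Finset Q} (hc : c ∈ C.SX) (hγ : γ ∈ ZX C) : c ∩ γ ∈ C.SZ := by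
  refine (mem_SZ_iff hdual).2 fun μ hμ => ?_
  rw [show c ∩ γ ∩ μ = γ ∩ μ ∩ c by ext q; simp only [Finset.mem_inter]; tauto]
  exact two_dvd_card_inter_inter hb htinv hc hγ hμ

theorem exists_logicalX (hsingle : SingleQubit C) : ∃ l, LogicalX C l :=
  Set.exists_of_ssubset ((SX_subset_ZX C).ssubset_of_ne hsingle.1.1.symm)

theorem exists_logicalZ (hsingle : SingleQubit C) : ∃ z, LogicalZ C z :=
  Set.exists_of_ssubset ((SZ_subset_ZZ C).ssubset_of_ne hsingle.2.1.symm)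

theorem LogicalZ.exists_eq_inter (hb : ∀ q, Odd (b q)) (hdual : Dual C)
    (hinter : Inter C) (htinv : TInv C b) {z : Finset Q} (hz : LogicalZ C z) :
    ∃ a c, LogicalX C a ∧ LogicalX C c ∧ z = a ∩ c := by
  obtain ⟨a, ha, c, hc, rfl⟩ : z ∈ {x | ∃ α ∈ ZX C, ∃ β ∈ ZX C, x = α ∩ β} := hinter ▸ hz.1
  refine ⟨a, c, ⟨ha, fun haX => hz.2 (inter_mem_SZ_of_mem_SX hb hdual htinv haX hc)⟩,
    ⟨hc, fun hcX => hz.2 ?_⟩, rfl⟩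
  rw [Finset.inter_comm]
  exact inter_mem_SZ_of_mem_SX hb hdual htinv hcX ha

theorem LogicalZ.not_two_dvd_card_inter (hdual : Dual C) (hsingle : SingleQubit C)
    {z l : Finset Q} (hz : LogicalZ C z) (hl : LogicalX C l) : ¬ 2 ∣ (z ∩ l).card := by
  obtain ⟨γ, hγ, hodd⟩ : ∃ γ ∈ ZX C, ¬ 2 ∣ (z ∩ γ).card := by
    simpa [mem_SZ_iff hdual] using hz.2
  have hγX : γ ∉ C.SX := fun h => hodd (hz.1 γ h)
  have hlγ := hz.1 _ (hsingle.1.2 l γ hl ⟨hγ, hγX⟩)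
  have := card_symmDiff_add (z ∩ l) (z ∩ γ)
  rw [← inter_symmDiff_left] at this
  omega

theorem LogicalZ.not_two_dvd_card (hb : ∀ q, Odd (b q)) (hdual : Dual C)
    (hsingle : SingleQubit C) (hinter : Inter C) (htinv : TInv C b)
    {z : Finset Q} (hz : LogicalZ C z) : ¬ 2 ∣ z.card := by
  obtain ⟨a, c, ha, -, rfl⟩ := hz.exists_eq_inter hb hdual hinter htinv
  have h := hz.not_two_dvd_card_inter hdual hsingle ha
  rwa [Finset.inter_right_comm, Finset.inter_self] at h

theorem inter_mem_SZ_of_mem_ZZ (hb : ∀ q, Odd (b q)) (hdual : Dual C)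
    (hsingle : SingleQubit C) (hinter : Inter C) (htinv : TInv C b)
    {α β : Finset Q} (hβ : β ∈ C.SX) (hαβ : α ∩ β ∈ ZZ C) : α ∩ β ∈ C.SZ := by
  by_contra hn
  refine LogicalZ.not_two_dvd_card hb hdual hsingle hinter htinv ⟨hαβ, hn⟩ ?_
  simpa [Finset.inter_assoc] using hαβ β hβ

theorem logicalZ_inter (hb : ∀ q, Odd (b q)) (hdual : Dual C)
    (hsingle : SingleQubit C) (hinter : Inter C) (htinv : TInv C b)
    {a c : Finset Q} (ha : LogicalX C a) (hc : LogicalX C c) : LogicalZ C (a ∩ c) := by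
  refine ⟨inter_mem_ZZ hinter ha.1 hc.1, fun hac => ?_⟩
  obtain ⟨z₀, hz₀⟩ := exists_logicalZ hsingle
  obtain ⟨a₀, c₀, ha₀, hc₀, rfl⟩ := hz₀.exists_eq_inter hb hdual hinter htinv
  -- `a₀ ∩ c₀` differs from `a ∩ c` by the stabilizers `(a ∆ a₀) ∩ c` and `a₀ ∩ (c ∆ c₀)`
  have h1 : (a ∆ a₀) ∩ c ∈ C.SZ :=
    inter_mem_SZ_of_mem_SX hb hdual htinv (hsingle.1.2 a a₀ ha ha₀) hc.1
  have h2 : a₀ ∩ (c ∆ c₀) ∈ C.SZ := by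
    rw [Finset.inter_comm]
    exact inter_mem_SZ_of_mem_SX hb hdual htinv (hsingle.1.2 c c₀ hc hc₀) ha₀.1
  have key : a₀ ∩ c₀ = ((a ∩ c) ∆ ((a ∆ a₀) ∩ c)) ∆ (a₀ ∩ (c ∆ c₀)) := by
    rw [inter_symmDiff_right, inter_symmDiff_left, symmDiff_symmDiff_cancel_left,
      symmDiff_symmDiff_cancel_left]
  exact hz₀.2 (key ▸ C.hSZ.2 _ (C.hSZ.2 _ hac _ h1) _ h2)

end CSSCode

section Tolerance

variable {C : CSS Q} {b : Q → ℤ}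

theorem mem_G_iff {α x : Finset Q} :
    x ∈ G C α ↔ ∃ f ∈ C.SZ, ∃ β ∈ ZX C, x = f ∆ (α ∩ β) := by
  refine ⟨fun hx => closure_subset (S := {y | ∃ f ∈ C.SZ, ∃ β ∈ ZX C, y = f ∆ (α ∩ β)})
    ⟨⟨∅, C.hSZ.1, ∅, (isSubgroup_ZX C).1, by
      rw [Finset.inter_empty]
      exact (symmDiff_self _).symm⟩, ?_⟩ ?_ hx, ?_⟩
  · rintro _ ⟨f, hf, β, hβ, rfl⟩ _ ⟨f', hf', β', hβ', rfl⟩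
    refine ⟨f ∆ f', C.hSZ.2 f hf f' hf', β ∆ β', (isSubgroup_ZX C).2 β hβ β' hβ', ?_⟩
    rw [inter_symmDiff_left, symmDiff_symmDiff_symmDiff_comm]
  · rintro y (hy | ⟨β, hβ, rfl⟩)
    · refine ⟨y, hy, ∅, (isSubgroup_ZX C).1, ?_⟩
      rw [Finset.inter_empty]
      exact (symmDiff_bot y).symm
    · exact ⟨∅, C.hSZ.1, β, hβ, (bot_symmDiff _).symm⟩
  · rintro ⟨f, hf, β, hβ, rfl⟩
    exact (isSubgroup_closure _).2 f (subset_closure _ (Or.inl hf)) _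
      (subset_closure _ (Or.inr ⟨β, hβ, rfl⟩))

theorem tolerable_iff {α : Finset Q} :
    Tolerable C α ↔ ∀ β ∈ ZX C, α ∩ β ∈ ZZ C → α ∩ β ∈ C.SZ := by
  simp only [Tolerable, mem_G_iff, LogicalZ]
  constructor
  · intro h β hβ hzz
    by_contra hn
    exact h _ ⟨∅, C.hSZ.1, β, hβ, (bot_symmDiff _).symm⟩ ⟨hzz, hn⟩
  · rintro h _ ⟨f, hf, β, hβ, rfl⟩ ⟨hzz, hn⟩
    rw [(isSubgroup_ZZ C).symmDiff_mem_iff (SZ_subset_ZZ C hf)] at hzz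
    rw [C.hSZ.symmDiff_mem_iff hf] at hn
    exact hn (h β hβ hzz)

theorem tolerable_symmDiff_of_not_tolerable (hb : ∀ q, Odd (b q))
    (hdual : Dual C) (hsingle : SingleQubit C) (hinter : Inter C) (htinv : TInv C b)
    {α l : Finset Q} (hntol : ¬ Tolerable C α) (hl : LogicalX C l) :
    Tolerable C (α ∆ l) := by
  obtain ⟨β₀, hβ₀, hzz₀, hsz₀⟩ : ∃ β₀ ∈ ZX C, α ∩ β₀ ∈ ZZ C ∧ α ∩ β₀ ∉ C.SZ := by
    simpa [tolerable_iff] using hntol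
  have hβ₀X : β₀ ∉ C.SX := fun h =>
    hsz₀ (inter_mem_SZ_of_mem_ZZ hb hdual hsingle hinter htinv h hzz₀)
  refine tolerable_iff.2 fun β hβ hzz => ?_
  have hlβ : l ∩ β ∈ ZZ C := inter_mem_ZZ hinter hl.1 hβ
  rw [inter_symmDiff_right] at hzz ⊢
  have hαβ : α ∩ β ∈ ZZ C := by
    rwa [symmDiff_comm, (isSubgroup_ZZ C).symmDiff_mem_iff hlβ] at hzz
  by_cases hβX : β ∈ C.SX
  · refine C.hSZ.2 _ (inter_mem_SZ_of_mem_ZZ hb hdual hsingle hinter htinv hβX hαβ) _ ?_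
    rw [Finset.inter_comm]
    exact inter_mem_SZ_of_mem_SX hb hdual htinv hβX hl.1
  · -- `α ∩ β` differs from the logical `α ∩ β₀` by the stabilizer `α ∩ (β ∆ β₀)`
    have hmix : α ∩ (β ∆ β₀) ∈ C.SZ := by
      refine inter_mem_SZ_of_mem_ZZ hb hdual hsingle hinter htinv
        (hsingle.1.2 β β₀ ⟨hβ, hβX⟩ ⟨hβ₀, hβ₀X⟩) ?_
      rw [inter_symmDiff_left]
      exact (isSubgroup_ZZ C).2 _ hαβ _ hzz₀
    have hαβZ : LogicalZ C (α ∩ β) := by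
      refine ⟨hαβ, fun h => hsz₀ ?_⟩
      rw [← C.hSZ.symmDiff_mem_iff h, ← inter_symmDiff_left]
      exact hmix
    exact hsingle.2.2 _ _ hαβZ (logicalZ_inter hb hdual hsingle hinter htinv hl ⟨hβ, hβX⟩)

theorem inter_mem_ZZ_iff_of_tolerable (hinter : Inter C) {α l d : Finset Q}
    (hl : LogicalX C l) (htol : Tolerable C (α ∆ l)) (hd : d ∈ ZX C) :
    d ∩ α ∈ ZZ C ↔ d ∩ (α ∆ l) ∈ C.SZ := by
  have hdl : d ∩ l ∈ ZZ C := inter_mem_ZZ hinter hd hl.1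
  have hsplit : d ∩ (α ∆ l) ∈ ZZ C ↔ d ∩ α ∈ ZZ C := by
    rw [inter_symmDiff_left, symmDiff_comm, (isSubgroup_ZZ C).symmDiff_mem_iff hdl]
  rw [← hsplit]
  refine ⟨fun h => ?_, fun h => SZ_subset_ZZ C h⟩
  rw [Finset.inter_comm] at h ⊢
  exact tolerable_iff.1 htol d hd h

theorem mem_Zof_G_iff (hdual : Dual C) {α d : Finset Q} :
    d ∈ Zof (G C α) ↔ d ∈ ZX C ∧ d ∩ α ∈ C.SZ := by
  rw [G, Zof_closure, mem_SZ_iff hdual]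
  constructor
  · intro h
    refine ⟨fun f hf => h f (Or.inl hf), fun β hβ => ?_⟩
    rw [Finset.inter_assoc]
    exact h _ (Or.inr ⟨β, hβ, rfl⟩)
  · rintro ⟨hd, hdα⟩ x (hx | ⟨β, hβ, rfl⟩)
    · exact hd x hx
    · rw [← Finset.inter_assoc]
      exact hdα β hβ

theorem mem_E_iff_symmDiff_mem {α z₀ z : Finset Q} (hz₀ : z₀ ∈ E C b α) :
    z ∈ E C b α ↔ z₀ ∆ z ∈ Zof (Zof (G C α)) := by
  refine forall₂_congr fun γ hγ => ?_
  have h₀ := Int.ModEq.dvd (hz₀ γ hγ)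
  have hcard := card_symmDiff_add (z₀ ∩ γ) (z ∩ γ)
  rw [← inter_symmDiff_right] at hcard
  rw [Int.modEq_iff_dvd]
  omega

theorem exists_mem_E (hb : ∀ q, Odd (b q)) (hdual : Dual C) (hinter : Inter C)
    (α : Finset Q) : ∃ z₀, z₀ ∈ E C b α := by
  have hhalf : ∀ γ ∈ Zof (G C α), (2 : ℤ) ∣ g b (γ ∩ α) := fun γ hγ => by
    have := two_dvd_card_of_mem_SZ hinter ((mem_Zof_G_iff hdual).1 hγ).2
    have := two_dvd_g_sub_card hb (γ ∩ α)
    omega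
  -- `γ ↦ g(γ ∩ α) / 2 mod 2` is additive on `Z(G_α)`, hence given by pairing with some `z₀`
  obtain ⟨z₀, hz₀⟩ := exists_card_inter_eq (isSubgroup_Zof (G C α))
      (fun γ => ((g b (γ ∩ α) / 2 : ℤ) : ZMod 2)) fun γ hγ δ hδ => by
    have hcross : 2 ∣ ((γ ∩ α) ∩ (δ ∩ α)).card := by
      rw [show (γ ∩ α) ∩ (δ ∩ α) = δ ∩ (γ ∩ α) by ext; simp only [Finset.mem_inter]; tauto]
      exact ((mem_Zof_G_iff hdual).1 hδ).1 _ ((mem_Zof_G_iff hdual).1 hγ).2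
    have := two_dvd_g_sub_card hb ((γ ∩ α) ∩ (δ ∩ α))
    have hγδ := g_symmDiff b (γ ∩ α) (δ ∩ α)
    rw [← inter_symmDiff_right] at hγδ
    have := hhalf γ hγ
    have := hhalf δ hδ
    rw [← Int.cast_add, ZMod.intCast_eq_intCast_iff_dvd_sub]
    omega
  refine ⟨z₀, fun γ hγ => ?_⟩
  have h := hz₀ γ hγ
  rw [← Int.cast_natCast, ZMod.intCast_eq_intCast_iff_dvd_sub] at h
  have := hhalf γ hγ
  rw [Int.modEq_iff_dvd]
  omega

end Tolerance

section PhaseMatching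

variable {C : CSS Q} {b : Q → ℤ}

theorem zeta_phase_symmDiff_stabilizer (hb : ∀ q, Odd (b q)) (htinv : TInv C b)
    {s t c : Finset Q} (α : Finset Q) (hs : s ∈ ZX C) (ht : t ∈ ZX C) (hc : c ∈ C.SX) :
    ζ ^ (g b (s ∆ α ∆ c) - g b (t ∆ α ∆ c))
      = ζ ^ (g b (s ∆ α) - g b (t ∆ α)) * (-1) ^ ((s ∆ t) ∩ α ∩ c).card := by
  have hd : s ∆ t ∈ ZX C := (isSubgroup_ZX C).2 s hs t ht
  have hζ : ζ ^ (-(2 * g b ((s ∆ t) ∩ c))) = 1 := by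
    have h8 := htinv.1 c hc
    have h8' := htinv.2 c hc _ hd
    rw [zeta_zpow_eq_of_modEq (c := 0) (Int.modEq_iff_dvd.2 (by omega)), zpow_zero]
  have hsplit : (t ∆ α) ∩ ((s ∆ t) ∩ c) = (t ∩ (s ∆ t) ∩ c) ∆ ((s ∆ t) ∩ α ∩ c) := by
    rw [inter_symmDiff_right]
    congr 1
    · rw [Finset.inter_assoc]
    · ext q
      simp only [Finset.mem_inter]
      tauto
  have heven := two_dvd_card_inter_inter hb htinv hc ht hd
  rw [zeta_zpow_g_symmDiff_sub hb, symmDiff_symmDiff_symmDiff_self, hζ, mul_one, hsplit,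
    neg_one_pow_card_symmDiff, (even_iff_two_dvd.2 heven).neg_one_pow, one_mul]

theorem zeta_phase_symmDiff_logical (hb : ∀ q, Odd (b q)) {α l s t z₀ : Finset Q}
    (htl : t ∆ l ∈ ZX C) (hdSZ : (s ∆ t) ∩ (α ∆ l) ∈ C.SZ)
    (hz₀ : g b ((s ∆ t) ∩ (α ∆ l)) ≡ 2 * ((z₀ ∩ (s ∆ t)).card : ℤ) [ZMOD 4]) :
    ζ ^ (g b (s ∆ α) - g b (t ∆ α))
      = ζ ^ (g b (s ∆ l) - g b (t ∆ l)) * (-1) ^ ((s ∆ t) ∩ z₀).card := by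
  -- `s ∆ α = (s ∆ l) ∆ (α ∆ l)`, and likewise for `t`
  have h := zeta_zpow_g_symmDiff_sub hb (s ∆ l) (t ∆ l) (α ∆ l)
  have hζ : ζ ^ (-(2 * g b ((s ∆ t) ∩ (α ∆ l)))) = (-1) ^ ((s ∆ t) ∩ z₀).card := by
    rw [← zeta_zpow_four_mul, Finset.inter_comm (s ∆ t) z₀]
    exact zeta_zpow_eq_of_modEq (Int.modEq_iff_dvd.2 (by have := hz₀.dvd; omega))
  have hsign : (-1 : ℂ) ^ ((t ∆ l) ∩ ((s ∆ t) ∩ (α ∆ l))).card = 1 :=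
    (even_iff_two_dvd.2 (htl _ hdSZ)).neg_one_pow
  simp only [symmDiff_symmDiff_symmDiff_self] at h
  rwa [hζ, hsign, mul_one] at h

theorem avg_SX_phase_eq_avg_E_phase (hb : ∀ q, Odd (b q)) (hdual : Dual C) (hinter : Inter C)
    (htinv : TInv C b) {α l s t : Finset Q} (hl : LogicalX C l) (htol : Tolerable C (α ∆ l))
    (hs : s ∈ ZX C) (ht : t ∈ ZX C) :
    avg C.SX (fun c => ζ ^ (g b (s ∆ α ∆ c) - g b (t ∆ α ∆ c)))
      = avg (E C b (α ∆ l))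
          (fun z => ζ ^ (g b (s ∆ l) - g b (t ∆ l)) * (-1) ^ ((s ∆ t) ∩ z).card) := by
  have hd : s ∆ t ∈ ZX C := (isSubgroup_ZX C).2 s hs t ht
  obtain ⟨z₀, hz₀⟩ := exists_mem_E hb hdual hinter (α ∆ l)
  have hK := isSubgroup_Zof (Zof (G C (α ∆ l)))
  rw [avg_congr fun c hc => zeta_phase_symmDiff_stabilizer hb htinv α hs ht hc, avg_const_mul,
    avg_eq_avg_symmDiff z₀ (fun z => mem_E_iff_symmDiff_mem hz₀), avg_const_mul]
  simp only [inter_symmDiff_left, neg_one_pow_card_symmDiff]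
  rw [avg_const_mul]
  by_cases hdα : (s ∆ t) ∩ α ∈ ZZ C
  · have hdSZ := (inter_mem_ZZ_iff_of_tolerable hinter hl htol hd).1 hdα
    have hdG : s ∆ t ∈ Zof (G C (α ∆ l)) := (mem_Zof_G_iff hdual).2 ⟨hd, hdSZ⟩
    rw [avg_neg_one_pow_card_inter_of_mem C.hSX hdα,
      avg_neg_one_pow_card_inter_of_mem hK (by rwa [Zof_Zof_Zof]),
      zeta_phase_symmDiff_logical hb ((isSubgroup_ZX C).2 t ht l hl.1) hdSZ (hz₀ _ hdG)]
    ring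
  · have hdG : s ∆ t ∉ Zof (Zof (Zof (G C (α ∆ l)))) := by
      rw [Zof_Zof_Zof, mem_Zof_G_iff hdual, ← inter_mem_ZZ_iff_of_tolerable hinter hl htol hd]
      exact fun h => hdα h.2
    rw [avg_neg_one_pow_card_inter_of_notMem C.hSX hdα,
      avg_neg_one_pow_card_inter_of_notMem hK hdG]
    ring

end PhaseMatching

section Operators

theorem XM_apply (a : Finset Q) (u w : Q → ZMod 2) :
    XM a u w = if w = u + ind a then 1 else 0 := by
  have h : u = w + ind a ↔ w = u + ind a := by
    constructor <;> rintro rfl <;> rw [add_ind_add_ind]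
  simp only [XM, Matrix.of_apply, h]

theorem XM_mul_apply (a : Finset Q) (A : M Q) (u v : Q → ZMod 2) :
    (XM a * A) u v = A (u + ind a) v := by
  simp [Matrix.mul_apply, XM_apply]

theorem mul_XM_apply (A : M Q) (a : Finset Q) (u v : Q → ZMod 2) :
    (A * XM a) u v = A u (v + ind a) := by
  simp [Matrix.mul_apply, XM]

theorem XM_conjTranspose (a : Finset Q) : (XM a)ᴴ = XM a := by
  ext u v
  rw [Matrix.conjTranspose_apply, XM_apply]
  simp [XM]

theorem UM_eq (b : Q → ℤ) : UM b = Matrix.diagonal fun v => ζ ^ g b (supp v) := rfl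

theorem UM_mul_conjTranspose (b : Q → ℤ) : UM b * (UM b)ᴴ = 1 := by
  rw [UM_eq, Matrix.diagonal_conjTranspose, Matrix.diagonal_mul_diagonal, ← Matrix.diagonal_one]
  congr 1
  funext v
  rw [Pi.star_apply, star_zeta_zpow, ← zpow_add₀ zeta_ne_zero, add_neg_cancel, zpow_zero]

theorem UM_conj_apply (b : Q → ℤ) (A : M Q) (u v : Q → ZMod 2) :
    (UM b * A * (UM b)ᴴ) u v = ζ ^ (g b (supp u) - g b (supp v)) * A u v := by
  rw [UM_eq, Matrix.diagonal_conjTranspose, Matrix.mul_diagonal, Matrix.diagonal_mul,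
    Pi.star_apply, star_zeta_zpow, sub_eq_add_neg, zpow_add₀ zeta_ne_zero]
  ring

theorem ZM_conj_apply (z : Finset Q) (A : M Q) (u v : Q → ZMod 2) :
    (ZM z * A * ZM z) u v = (-1) ^ ((supp u ∆ supp v) ∩ z).card * A u v := by
  rw [ZM, Matrix.mul_diagonal, Matrix.diagonal_mul, inter_symmDiff_right,
    neg_one_pow_card_symmDiff]
  ring

theorem UM_mul_gate (b : Q → ℤ) (l : Finset Q) :
    UM b * ((UM b)ᴴ * XM l * UM b * XM l) = XM l * UM b * XM l := by
  simp only [← mul_assoc, UM_mul_conjTranspose, one_mul]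

theorem smul_sum_apply (S : Set (Finset Q)) (A : Finset Q → M Q) (u v : Q → ZMod 2) :
    ((((Set.toFinite S).toFinset.card : ℂ))⁻¹ • ∑ c ∈ (Set.toFinite S).toFinset, A c) u v
      = avg S fun c => A c u v := by
  simp [avg, Matrix.sum_apply]

variable {C : CSS Q} {ρ : M Q}

theorem Encoded.apply_add_ind (hρ : Encoded C ρ) {c : Finset Q} (hc : c ∈ C.SX)
    (x y : Q → ZMod 2) : ρ (x + ind c) (y + ind c) = ρ x y := by
  rw [← XM_mul_apply c ρ x, (hρ.2.1 c hc).1, ← mul_XM_apply ρ c x y, (hρ.2.1 c hc).2]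

theorem Encoded.supp_mem_ZX_left (hρ : Encoded C ρ) {x y : Q → ZMod 2} (h : ρ x y ≠ 0) :
    supp x ∈ ZX C := fun f hf => by
  have he := congrFun (congrFun (hρ.2.2 f hf).1 x) y
  rw [ZM, Matrix.diagonal_mul, mul_eq_right₀ h] at he
  exact even_iff_two_dvd.1 ((neg_one_pow_eq_one_iff_even (by norm_num)).1 he)

theorem Encoded.supp_mem_ZX_right (hρ : Encoded C ρ) {x y : Q → ZMod 2} (h : ρ x y ≠ 0) :
    supp y ∈ ZX C := fun f hf => by
  have he := congrFun (congrFun (hρ.2.2 f hf).2 x) y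
  rw [ZM, Matrix.mul_diagonal, mul_eq_left₀ h] at he
  exact even_iff_two_dvd.1 ((neg_one_pow_eq_one_iff_even (by norm_num)).1 he)

end Operators

section Propagation

variable {C : CSS Q} {ρ : M Q}

theorem X_twirl_apply (hρ : Encoded C ρ) (b : Q → ℤ) (α : Finset Q) (x y : Q → ZMod 2) :
    ((((Set.toFinite C.SX).toFinset.card : ℂ))⁻¹ • ∑ c ∈ (Set.toFinite C.SX).toFinset,
        XM c * (UM b * (XM α * ρ * XM α) * (UM b)ᴴ) * XM c) (x + ind α) (y + ind α)
      = ρ x y * avg C.SX fun c => ζ ^ (g b (supp x ∆ α ∆ c) - g b (supp y ∆ α ∆ c)) := by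
  rw [smul_sum_apply, ← avg_const_mul]
  refine avg_congr fun c hc => ?_
  rw [mul_XM_apply, XM_mul_apply, UM_conj_apply, mul_XM_apply, XM_mul_apply,
    add_right_comm (x + ind α), add_right_comm (y + ind α), add_ind_add_ind, add_ind_add_ind,
    hρ.apply_add_ind hc]
  simp only [supp_add_ind]
  ring

theorem Z_twirl_apply (b : Q → ℤ) (l : Finset Q) (S : Set (Finset Q)) (x y : Q → ZMod 2) :
    ((((Set.toFinite S).toFinset.card : ℂ))⁻¹ • ∑ z ∈ (Set.toFinite S).toFinset,
        ZM z * (UM b * (((UM b)ᴴ * XM l * UM b * XM l) * ρ *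
          ((UM b)ᴴ * XM l * UM b * XM l)ᴴ) * (UM b)ᴴ) * ZM z) x y
      = ρ x y * avg S fun z =>
          ζ ^ (g b (supp x ∆ l) - g b (supp y ∆ l)) * (-1) ^ ((supp x ∆ supp y) ∩ z).card := by
  set w := (UM b)ᴴ * XM l * UM b * XM l
  have hsandwich : UM b * (w * ρ * wᴴ) * (UM b)ᴴ
      = XM l * (UM b * (XM l * ρ * XM l) * (UM b)ᴴ) * XM l :=
    calc UM b * (w * ρ * wᴴ) * (UM b)ᴴ = (UM b * w) * ρ * (UM b * w)ᴴ := by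
          rw [Matrix.conjTranspose_mul (UM b) w]
          simp only [mul_assoc]
      _ = _ := by
          rw [UM_mul_gate, Matrix.conjTranspose_mul, Matrix.conjTranspose_mul, XM_conjTranspose]
          simp only [mul_assoc]
  rw [smul_sum_apply, ← avg_const_mul]
  refine avg_congr fun z _ => ?_
  rw [ZM_conj_apply, hsandwich, mul_XM_apply, XM_mul_apply, UM_conj_apply, mul_XM_apply,
    XM_mul_apply, add_ind_add_ind, add_ind_add_ind, supp_add_ind, supp_add_ind]
  ring

end Propagation

/-- Theorem 1 (non-tolerable case): there is a logical `X` operator `l` with `α ∆ l`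
tolerable, and for any such `l` the propagated error additionally includes the encoded
gate `w = U† X_l U X_l` applied before `U`. -/
theorem transversal_T_propagation_not_tolerable
    (C : CSS Q) (b : Q → ℤ) (hb : ∀ q, Odd (b q))
    (hdual : Dual C) (hsingle : SingleQubit C) (hinter : Inter C) (htinv : TInv C b)
    (α : Finset Q) (hntol : ¬ Tolerable C α) (ρ : M Q) (hρ : Encoded C ρ) :
    (∃ l, LogicalX C l ∧ Tolerable C (α ∆ l)) ∧
    ∀ l, LogicalX C l → Tolerable C (α ∆ l) →
      (((Set.toFinite C.SX).toFinset.card : ℂ))⁻¹ •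
          ∑ c ∈ (Set.toFinite C.SX).toFinset,
            XM c * (UM b * (XM α * ρ * XM α) * (UM b)ᴴ) * XM c
        = XM α *
          ((((Set.toFinite (E C b (α ∆ l))).toFinset.card : ℂ))⁻¹ •
            ∑ z ∈ (Set.toFinite (E C b (α ∆ l))).toFinset,
              ZM z * (UM b *
                  (((UM b)ᴴ * XM l * UM b * XM l) * ρ *
                    ((UM b)ᴴ * XM l * UM b * XM l)ᴴ) *
                  (UM b)ᴴ) * ZM z) * XM α := by
  obtain ⟨l₀, hl₀⟩ := exists_logicalX hsingle
  refine ⟨⟨l₀, hl₀, tolerable_symmDiff_of_not_tolerable hb hdual hsingle hinter htinv hntol hl₀⟩,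
    fun l hl htol => Matrix.ext fun u v => ?_⟩
  obtain ⟨x, rfl⟩ : ∃ x, u = x + ind α := ⟨u + ind α, (add_ind_add_ind u α).symm⟩
  obtain ⟨y, rfl⟩ : ∃ y, v = y + ind α := ⟨v + ind α, (add_ind_add_ind v α).symm⟩
  rw [X_twirl_apply hρ, mul_XM_apply, XM_mul_apply, add_ind_add_ind, add_ind_add_ind,
    Z_twirl_apply]
  by_cases hxy : ρ x y = 0
  · rw [hxy, zero_mul, zero_mul]
  · rw [avg_SX_phase_eq_avg_E_phase hb hdual hinter htinv hl htol (hρ.supp_mem_ZX_left hxy)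
      (hρ.supp_mem_ZX_right hxy)]

end CC
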